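/- arXiv:2504.10699 — 3 statements merged into one kernel-verified Lean document; each statement's English description precedes it below -/
import Mathlib

section
/- Let ψ₁ = (φ₁, υ₁) and ψ₂ = (φ₂, υ₂) be solution pairs to a hybrid system H = (C, f, D, g) with ψ₁ compact. Then the concatenation ψ = (φ, υ) = ψ₁|ψ₂ satisfies: for each j ∈ ℕ such that I^j_ψ := {t : (t,j) ∈ dom ψ} has nonempty interior, (d/dt)φ(t,j) = f(φ(t,j), υ(t,j)) for almost all t ∈ I^j_ψ. -/
/-!
Slice `j` of the concatenated domain is the slice of `E₁`, which lies left of `T`, together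
with a translate of a slice of `E₂`, which lies right of `T`. Away from `T` each piece is a
relative neighbourhood of its points in the whole slice, and on it `φ` agrees with `φ₁`, resp.
with the translate of `φ₂`; so the derivatives that `ψ₁` and `ψ₂` provide within their own
slices are derivatives within the slice of the concatenation. The point `T` is Lebesgue-null,
and so is every slice of a hybrid time domain with empty interior.
-/

open MeasureTheory Set

noncomputable section

/-- State/input space: `ℝ^k` with the Euclidean norm. -/
abbrev Vec (k : ℕ) : Type := EuclideanSpace ℝ (Fin k)

/-- A set `E ⊆ ℝ × ℕ` is a compact hybrid time domain if
`E = ⋃_{j=0}^{J} ([t_j, t_{j+1}] × {j})` for some `J ∈ ℕ` and a finite nondecreasing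
sequence `0 = t_0 ≤ t_1 ≤ ... ≤ t_{J+1}`. -/
def IsCompactHTD (E : Set (ℝ × ℕ)) : Prop :=
  ∃ (J : ℕ) (t : ℕ → ℝ), t 0 = 0 ∧ (∀ i, i ≤ J → t i ≤ t (i + 1)) ∧
    E = ⋃ j ∈ Finset.range (J + 1), Set.Icc (t j) (t (j + 1)) ×ˢ ({j} : Set ℕ)

/-- A hybrid time domain is the union of a nondecreasing sequence of compact
hybrid time domains. -/
def IsHTD (E : Set (ℝ × ℕ)) : Prop :=
  ∃ F : ℕ → Set (ℝ × ℕ), (∀ k, IsCompactHTD (F k)) ∧ Monotone F ∧ E = ⋃ k, F k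

/-- The time slice `I^j = {t : (t,j) ∈ E}`. -/
def Slice (E : Set (ℝ × ℕ)) (j : ℕ) : Set ℝ := {t | (t, j) ∈ E}

/-- `(T,J) = max E` for a (compact) hybrid time domain `E`. -/
def IsMaxOf (E : Set (ℝ × ℕ)) (T : ℝ) (J : ℕ) : Prop :=
  (T, J) ∈ E ∧ ∀ p ∈ E, p.1 ≤ T ∧ p.2 ≤ J

/-- `s` is Lebesgue measurable on `S`: preimages (within `S`) of open sets are
Lebesgue measurable subsets of `ℝ`. -/
def LebesgueMeasurableOn {k : ℕ} (s : ℝ → Vec k) (S : Set ℝ) : Prop :=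
  ∀ U : Set (Vec k), IsOpen U → NullMeasurableSet {t | t ∈ S ∧ s t ∈ U} volume

/-- `s` is locally essentially bounded on `S`. -/
def LocallyEssBddOn {k : ℕ} (s : ℝ → Vec k) (S : Set ℝ) : Prop :=
  ∀ r ∈ S, ∃ U : Set ℝ, IsOpen U ∧ r ∈ U ∧ ∃ c : ℝ, 0 ≤ c ∧
    ∀ᵐ t ∂(volume.restrict (U ∩ S)), ‖s t‖ ≤ c

/-- `s` is absolutely continuous on `[a,b]`: for each `ε > 0` there is `δ > 0` such
that every countable collection of disjoint subintervals of `[a,b]` of total length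
at most `δ` has total variation of `s` at most `ε`. -/
def AbsContOn {k : ℕ} (s : ℝ → Vec k) (a b : ℝ) : Prop :=
  ∀ ε : ℝ, 0 < ε → ∃ δ : ℝ, 0 < δ ∧ ∀ I : ℕ → ℝ × ℝ,
    (∀ i, a ≤ (I i).1 ∧ (I i).1 ≤ (I i).2 ∧ (I i).2 ≤ b) →
    (∀ i i', i ≠ i' → Disjoint (Set.Ioo (I i).1 (I i).2) (Set.Ioo (I i').1 (I i').2)) →
    (∑' i, ((I i).2 - (I i).1)) ≤ δ →
    (∑' i, ‖s (I i).2 - s (I i).1‖) ≤ ε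

/-- `s` is locally absolutely continuous on `S`: absolutely continuous on every
compact subinterval of `S`. -/
def LocAbsContOn {k : ℕ} (s : ℝ → Vec k) (S : Set ℝ) : Prop :=
  ∀ a b : ℝ, a ≤ b → Set.Icc a b ⊆ S → AbsContOn s a b

/-- `s` is locally bounded on `S`. -/
def LocallyBoundedOn {k : ℕ} (s : ℝ → Vec k) (S : Set ℝ) : Prop :=
  ∀ t₀ ∈ S, ∃ A ∈ nhds t₀, ∃ M : ℝ, 0 < M ∧ ∀ t ∈ A ∩ S, ‖s t‖ ≤ M

/-- A hybrid input: a function on a hybrid time domain `E` that is Lebesgue measurable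
and locally essentially bounded on each time slice. -/
def IsHybridInput {m : ℕ} (υ : ℝ → ℕ → Vec m) (E : Set (ℝ × ℕ)) : Prop :=
  IsHTD E ∧ ∀ j : ℕ,
    LebesgueMeasurableOn (fun t => υ t j) (Slice E j) ∧
    LocallyEssBddOn (fun t => υ t j) (Slice E j)

/-- A hybrid arc: a function on a hybrid time domain `E` that is locally absolutely
continuous on each time slice. -/
def IsHybridArc {n : ℕ} (φ : ℝ → ℕ → Vec n) (E : Set (ℝ × ℕ)) : Prop :=
  IsHTD E ∧ ∀ j : ℕ, LocAbsContOn (fun t => φ t j) (Slice E j)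

/-- A hybrid system `H = (C, f, D, g)`. -/
structure HybridSystem (n m : ℕ) where
  C : Set (Vec n × Vec m)
  f : Vec n × Vec m → Vec n
  D : Set (Vec n × Vec m)
  g : Vec n × Vec m → Vec n

/-- `(φ, υ)` with common domain `E` is a solution pair to `H`. -/
def IsSolutionPair {n m : ℕ} (H : HybridSystem n m)
    (φ : ℝ → ℕ → Vec n) (υ : ℝ → ℕ → Vec m) (E : Set (ℝ × ℕ)) : Prop :=
  IsHybridArc φ E ∧ IsHybridInput υ E ∧
  (φ 0 0, υ 0 0) ∈ closure H.C ∪ H.D ∧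
  (∀ j : ℕ, (interior (Slice E j)).Nonempty →
    (∀ t ∈ interior (Slice E j), (φ t j, υ t j) ∈ H.C) ∧
    (∀ᵐ t ∂(volume.restrict (Slice E j)),
      HasDerivWithinAt (fun s => φ s j) (H.f (φ t j, υ t j)) (Slice E j) t)) ∧
  (∀ p : ℝ × ℕ, p ∈ E → (p.1, p.2 + 1) ∈ E →
    (φ p.1 p.2, υ p.1 p.2) ∈ H.D ∧ φ p.1 (p.2 + 1) = H.g (φ p.1 p.2, υ p.1 p.2))

/-- Backward-in-time jump map `g^bw(x,u) = {z : x = g(z,u), (z,u) ∈ D}`. -/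
def gbw {n m : ℕ} (H : HybridSystem n m) (x : Vec n) (u : Vec m) : Set (Vec n) :=
  {z | x = H.g (z, u) ∧ (z, u) ∈ H.D}

/-- Backward-in-time jump set `D^bw`. -/
def Dbw {n m : ℕ} (H : HybridSystem n m) : Set (Vec n × Vec m) :=
  {p | ∃ z : Vec n, p.1 = H.g (z, p.2) ∧ (z, p.2) ∈ H.D}

/-- `(φ, υ)` with common domain `E` is a solution pair to the backward-in-time
system `H^bw = (C, -f, D^bw, g^bw)` of `H` (the jump inclusion is set-valued). -/
def IsBwSolutionPair {n m : ℕ} (H : HybridSystem n m)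
    (φ : ℝ → ℕ → Vec n) (υ : ℝ → ℕ → Vec m) (E : Set (ℝ × ℕ)) : Prop :=
  IsHybridArc φ E ∧ IsHybridInput υ E ∧
  (φ 0 0, υ 0 0) ∈ closure H.C ∪ Dbw H ∧
  (∀ j : ℕ, (interior (Slice E j)).Nonempty →
    (∀ t ∈ interior (Slice E j), (φ t j, υ t j) ∈ H.C) ∧
    (∀ᵐ t ∂(volume.restrict (Slice E j)),
      HasDerivWithinAt (fun s => φ s j) (-(H.f (φ t j, υ t j))) (Slice E j) t)) ∧
  (∀ p : ℝ × ℕ, p ∈ E → (p.1, p.2 + 1) ∈ E →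
    (φ p.1 p.2, υ p.1 p.2) ∈ Dbw H ∧ φ p.1 (p.2 + 1) ∈ gbw H (φ p.1 p.2) (υ p.1 p.2))

/-- Minkowski sum `E + {(T,J)}`. -/
def Shift (E : Set (ℝ × ℕ)) (T : ℝ) (J : ℕ) : Set (ℝ × ℕ) :=
  {p | ∃ q ∈ E, p = (q.1 + T, q.2 + J)}

/-- `ψ` with domain `E` is the concatenation `ψ₁|ψ₂`, where `(T,J) = max E₁`. -/
def IsConcat {α : Type*} (T : ℝ) (J : ℕ)
    (ψ₁ : ℝ → ℕ → α) (E₁ : Set (ℝ × ℕ))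
    (ψ₂ : ℝ → ℕ → α) (E₂ : Set (ℝ × ℕ))
    (ψ : ℝ → ℕ → α) (E : Set (ℝ × ℕ)) : Prop :=
  E = E₁ ∪ Shift E₂ T J ∧
  (∀ p ∈ E₁, p ≠ (T, J) → ψ p.1 p.2 = ψ₁ p.1 p.2) ∧
  (∀ p ∈ Shift E₂ T J, ψ p.1 p.2 = ψ₂ (p.1 - T) (p.2 - J))

/-- Minkowski difference `{(T,J)} − E`. -/
def RevDom (E : Set (ℝ × ℕ)) (T : ℝ) (J : ℕ) : Set (ℝ × ℕ) :=
  {p | ∃ q ∈ E, p = (T - q.1, J - q.2)}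

/-- `(φ', υ')` with domain `E'` is the reversal of the compact pair `(φ, υ)` with
domain `E` and `(T,J) = max E`; `C` is the flow set used in the closure condition
on `υ'(0,0)`. -/
def IsReversal {n m : ℕ} (C : Set (Vec n × Vec m)) (T : ℝ) (J : ℕ)
    (φ : ℝ → ℕ → Vec n) (υ : ℝ → ℕ → Vec m) (E : Set (ℝ × ℕ))
    (φ' : ℝ → ℕ → Vec n) (υ' : ℝ → ℕ → Vec m) (E' : Set (ℝ × ℕ)) : Prop :=
  E' = RevDom E T J ∧
  (∀ p ∈ E', φ' p.1 p.2 = φ (T - p.1) (J - p.2)) ∧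
  (∀ j : ℕ, ∀ t ∈ interior (Slice E' j), υ' t j = υ (T - t) (J - j)) ∧
  ((interior (Slice E' 0)).Nonempty → (φ' 0 0, υ' 0 0) ∈ closure C) ∧
  (∀ p : ℝ × ℕ, p ∈ E' → (p.1, p.2 + 1) ∈ E' → υ' p.1 p.2 = υ (T - p.1) (J - (p.2 + 1)))

/-- Lipschitz flow assumption with constants `Kx, Ku`. -/
def LipschitzFlow {n m : ℕ} (H : HybridSystem n m) (Kx Ku : ℝ) : Prop :=
  0 < Kx ∧ 0 < Ku ∧
  ∀ (x₀ x₁ : Vec n) (u₀ u₁ : Vec m),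
    (x₀, u₀) ∈ H.C → (x₁, u₀) ∈ H.C → (x₀, u₁) ∈ H.C →
    ‖H.f (x₀, u₀) - H.f (x₁, u₀)‖ ≤ Kx * ‖x₀ - x₁‖ ∧
    ‖H.f (x₀, u₀) - H.f (x₀, u₁)‖ ≤ Ku * ‖u₀ - u₁‖

/-- Linearly bounded jump map assumption with constants `Kx, Ku`. -/
def LinearBoundedJump {n m : ℕ} (H : HybridSystem n m) (Kx Ku : ℝ) : Prop :=
  0 < Kx ∧ 0 < Ku ∧
  ∀ (x₀ x₁ : Vec n) (u₀ u₁ : Vec m), (x₀, u₀) ∈ H.D → (x₁, u₁) ∈ H.D →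
    ‖H.g (x₀, u₀) - H.g (x₁, u₁)‖ ≤ Kx * ‖x₀ - x₁‖ + Ku * ‖u₀ - u₁‖

/-- `φ` with domain `F ⊆ E'` is a reconstructed solution with input `υ'` (defined on
`E'`) and initial condition `x0`: it starts at `x0`, flows according to
`f(·, υ')` on each nondegenerate slice, and jumps according to `g(·, υ')`. -/
def IsReconSolution {n m : ℕ} (H : HybridSystem n m)
    (υ' : ℝ → ℕ → Vec m) (E' : Set (ℝ × ℕ)) (x0 : Vec n)
    (φ : ℝ → ℕ → Vec n) (F : Set (ℝ × ℕ)) : Prop :=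
  F ⊆ E' ∧ (0, 0) ∈ F ∧ φ 0 0 = x0 ∧ IsHTD F ∧
  (∀ j : ℕ, LocAbsContOn (fun t => φ t j) (Slice F j)) ∧
  (∀ j : ℕ, (interior (Slice F j)).Nonempty →
    ∀ᵐ t ∂(volume.restrict (Slice F j)),
      HasDerivWithinAt (fun s => φ s j) (H.f (φ t j, υ' t j)) (Slice F j) t) ∧
  (∀ p : ℝ × ℕ, p ∈ F → (p.1, p.2 + 1) ∈ F →
    φ p.1 (p.2 + 1) = H.g (φ p.1 p.2, υ' p.1 p.2))

/-- A maximal reconstructed solution: one admitting no proper extension. -/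
def IsMaximalRecon {n m : ℕ} (H : HybridSystem n m)
    (υ' : ℝ → ℕ → Vec m) (E' : Set (ℝ × ℕ)) (x0 : Vec n)
    (φ : ℝ → ℕ → Vec n) (F : Set (ℝ × ℕ)) : Prop :=
  IsReconSolution H υ' E' x0 φ F ∧
  ∀ (φ₂ : ℝ → ℕ → Vec n) (F₂ : Set (ℝ × ℕ)),
    IsReconSolution H υ' E' x0 φ₂ F₂ → F ⊆ F₂ →
    (∀ p ∈ F, φ₂ p.1 p.2 = φ p.1 p.2) → F₂ = F

open Filter Topology

theorem IsCompactHTD.exists_slice_eq_Icc {E : Set (ℝ × ℕ)} (hE : IsCompactHTD E) (j : ℕ) :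
    ∃ a b : ℝ, 0 ≤ a ∧ Slice E j = Icc a b := by
  obtain ⟨J, t, ht0, hmono, rfl⟩ := hE
  have hnonneg : ∀ i ≤ J + 1, 0 ≤ t i := by
    intro i
    induction i with
    | zero => simp [ht0]
    | succ i ih => exact fun hi => (ih (by omega)).trans (hmono i (by omega))
  by_cases hj : j ≤ J
  · refine ⟨t j, t (j + 1), hnonneg j (by omega), ?_⟩
    ext s
    simp [Slice, hj]
  · refine ⟨1, 0, zero_le_one, ?_⟩
    ext s
    simp only [Slice, Icc_eq_empty (by norm_num : ¬ (1 : ℝ) ≤ 0)]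
    simp
    omega

namespace IsHTD

variable {E : Set (ℝ × ℕ)}

theorem exists_slice_eq_iUnion_Icc (hE : IsHTD E) (j : ℕ) :
    ∃ a b : ℕ → ℝ, (∀ k, 0 ≤ a k) ∧ Slice E j = ⋃ k, Icc (a k) (b k) := by
  obtain ⟨F, hF, -, rfl⟩ := hE
  choose a b ha hab using fun k => (hF k).exists_slice_eq_Icc j
  refine ⟨a, b, ha, ?_⟩
  simp_rw [← hab]
  ext t
  simp [Slice]

theorem measurableSet_slice (hE : IsHTD E) (j : ℕ) : MeasurableSet (Slice E j) := by
  obtain ⟨a, b, -, hab⟩ := hE.exists_slice_eq_iUnion_Icc j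
  rw [hab]
  exact .iUnion fun k => measurableSet_Icc

theorem slice_subset_Ici (hE : IsHTD E) (j : ℕ) : Slice E j ⊆ Ici 0 := by
  obtain ⟨a, b, ha, hab⟩ := hE.exists_slice_eq_iUnion_Icc j
  rw [hab]
  exact iUnion_subset fun k => Icc_subset_Ici_self.trans (Ici_subset_Ici.2 (ha k))

theorem volume_slice_eq_zero (hE : IsHTD E) {j : ℕ} (hint : interior (Slice E j) = ∅) :
    volume (Slice E j) = 0 := by
  obtain ⟨a, b, -, hab⟩ := hE.exists_slice_eq_iUnion_Icc j
  rw [hab] at hint ⊢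
  refine measure_iUnion_null fun k => ?_
  have hIoo : Ioo (a k) (b k) = ∅ := by
    rw [← interior_Icc, ← subset_empty_iff, ← hint]
    exact interior_mono (subset_iUnion (fun k => Icc (a k) (b k)) k)
  rw [Real.volume_Icc, ← Real.volume_Ioo, hIoo, measure_empty]

end IsHTD

theorem IsSolutionPair.ae_hasDerivWithinAt {n m : ℕ} {H : HybridSystem n m}
    {φ : ℝ → ℕ → Vec n} {υ : ℝ → ℕ → Vec m} {E : Set (ℝ × ℕ)}
    (h : IsSolutionPair H φ υ E) (j : ℕ) :
    ∀ᵐ t ∂volume.restrict (Slice E j),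
      HasDerivWithinAt (fun s => φ s j) (H.f (φ t j, υ t j)) (Slice E j) t := by
  by_cases hint : (interior (Slice E j)).Nonempty
  · exact (h.2.2.2.1 j hint).2
  · rw [Measure.restrict_eq_zero.2
      (h.1.1.volume_slice_eq_zero (not_nonempty_iff_eq_empty.1 hint))]
    simp

theorem slice_union (X Y : Set (ℝ × ℕ)) (j : ℕ) :
    Slice (X ∪ Y) j = Slice X j ∪ Slice Y j := rfl

theorem slice_shift_of_lt {E : Set (ℝ × ℕ)} {T : ℝ} {J j : ℕ} (h : j < J) :
    Slice (Shift E T J) j = ∅ := by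
  refine eq_empty_of_forall_notMem fun t ⟨q, _, hq⟩ => ?_
  have : j = q.2 + J := congrArg Prod.snd hq
  omega

theorem slice_shift_of_le {E : Set (ℝ × ℕ)} {T : ℝ} {J j : ℕ} (h : J ≤ j) :
    Slice (Shift E T J) j = (· - T) ⁻¹' Slice E (j - J) := by
  ext t
  constructor
  · rintro ⟨q, hq, hqt⟩
    obtain ⟨rfl, rfl⟩ := Prod.ext_iff.1 hqt
    simpa [Slice] using hq
  · intro ht
    exact ⟨(t - T, j - J), ht, by simp [Nat.sub_add_cancel h]⟩

theorem IsHTD.slice_shift_subset_Ici {E : Set (ℝ × ℕ)} (hE : IsHTD E) (T : ℝ) (J j : ℕ) :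
    Slice (Shift E T J) j ⊆ Ici T := by
  rcases lt_or_ge j J with hj | hj
  · simp [slice_shift_of_lt hj]
  · rw [slice_shift_of_le hj]
    intro t ht
    simpa using hE.slice_subset_Ici (j - J) ht

theorem IsMaxOf.slice_subset_Iic {E : Set (ℝ × ℕ)} {T : ℝ} {J : ℕ} (h : IsMaxOf E T J)
    (j : ℕ) : Slice E j ⊆ Iic T :=
  fun t ht => (h.2 (t, j) ht).1

section Deriv

variable {𝕜 F : Type*} [NontriviallyNormedField 𝕜] [NormedAddCommGroup F] [NormedSpace 𝕜 F]
  {f : 𝕜 → F} {f' : F} {s t : Set 𝕜} {x : 𝕜}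

theorem HasDerivWithinAt.comp_sub_const (a : 𝕜) (hf : HasDerivWithinAt f f' s (x - a)) :
    HasDerivWithinAt (fun y => f (y - a)) f' ((· - a) ⁻¹' s) x := by
  simpa [Function.comp_def] using
    hf.scomp x ((hasDerivWithinAt_id x _).sub_const a) (mapsTo_preimage _ s)

theorem HasDerivWithinAt.union_of_notMem_closure (hf : HasDerivWithinAt f f' s x)
    (hx : x ∉ closure t) : HasDerivWithinAt f f' (s ∪ t) x :=
  hf.union (HasFDerivWithinAt.of_notMem_closure hx)

end Deriv

section Concat

variable {n m : ℕ} {H : HybridSystem n m}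
  {φ₁ : ℝ → ℕ → Vec n} {υ₁ : ℝ → ℕ → Vec m} {E₁ : Set (ℝ × ℕ)}
  {φ₂ : ℝ → ℕ → Vec n} {υ₂ : ℝ → ℕ → Vec m} {E₂ : Set (ℝ × ℕ)}
  {φ : ℝ → ℕ → Vec n} {υ : ℝ → ℕ → Vec m} {E : Set (ℝ × ℕ)} {T : ℝ} {J : ℕ}

theorem IsConcat.slice_eq {α : Type*} {ψ₁ ψ₂ ψ : ℝ → ℕ → α}
    (h : IsConcat T J ψ₁ E₁ ψ₂ E₂ ψ E) (j : ℕ) :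
    Slice E j = Slice E₁ j ∪ Slice (Shift E₂ T J) j := by
  rw [h.1, slice_union]

theorem ae_hasDerivWithinAt_concat_left (h₁ : IsSolutionPair H φ₁ υ₁ E₁) (hE₂ : IsHTD E₂)
    (hmax : IsMaxOf E₁ T J) (hφ : IsConcat T J φ₁ E₁ φ₂ E₂ φ E)
    (hυ : IsConcat T J υ₁ E₁ υ₂ E₂ υ E) (j : ℕ) :
    ∀ᵐ t ∂volume.restrict (Slice E₁ j),
      HasDerivWithinAt (fun s => φ s j) (H.f (φ t j, υ t j)) (Slice E j) t := by
  filter_upwards [h₁.ae_hasDerivWithinAt j, ae_restrict_mem (h₁.1.1.measurableSet_slice j),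
    ae_restrict_of_ae (measure_eq_zero_iff_ae_notMem.1 (measure_singleton T))]
    with t hderiv htE₁ htT'
  have hne : ∀ s ≠ T, (s, j) ≠ (T, J) := fun s hs h => hs (congrArg Prod.fst h)
  have hagree : ∀ s ∈ Slice E₁ j, s ≠ T → φ s j = φ₁ s j :=
    fun s hs hsT => hφ.2.1 (s, j) hs (hne s hsT)
  have htT : t < T := (hmax.slice_subset_Iic j htE₁).lt_of_ne htT'
  have hclosure : t ∉ closure (Slice (Shift E₂ T J) j) := fun ht =>
    htT.not_ge (closure_minimal (hE₂.slice_shift_subset_Ici T J j) isClosed_Ici ht)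
  rw [hagree t htE₁ htT.ne, hυ.2.1 (t, j) htE₁ (hne t htT.ne), hφ.slice_eq]
  refine (hderiv.congr_of_eventuallyEq ?_ (hagree t htE₁ htT.ne)).union_of_notMem_closure hclosure
  filter_upwards [self_mem_nhdsWithin, nhdsWithin_le_nhds (isOpen_ne.mem_nhds htT.ne)]
    with s hs hsT using hagree s hs hsT

theorem ae_hasDerivWithinAt_concat_right (h₂ : IsSolutionPair H φ₂ υ₂ E₂)
    (hmax : IsMaxOf E₁ T J) (hφ : IsConcat T J φ₁ E₁ φ₂ E₂ φ E)
    (hυ : IsConcat T J υ₁ E₁ υ₂ E₂ υ E) (j : ℕ) :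
    ∀ᵐ t ∂volume.restrict (Slice (Shift E₂ T J) j),
      HasDerivWithinAt (fun s => φ s j) (H.f (φ t j, υ t j)) (Slice E j) t := by
  rcases lt_or_ge j J with hj | hj
  · simp [slice_shift_of_lt hj]
  have hS₂ := h₂.1.1.measurableSet_slice (j - J)
  have htranslate := (measurePreserving_sub_right volume T).restrict_preimage hS₂
  rw [slice_shift_of_le hj]
  filter_upwards [htranslate.quasiMeasurePreserving.ae (h₂.ae_hasDerivWithinAt (j - J)),
    ae_restrict_mem (hS₂.preimage (measurable_sub_const T)),
    ae_restrict_of_ae (measure_eq_zero_iff_ae_notMem.1 (measure_singleton T))]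
    with t hderiv htE₂ htT'
  have hshift : ∀ s ∈ (· - T) ⁻¹' Slice E₂ (j - J), (s, j) ∈ Shift E₂ T J := fun s hs => by
    change s ∈ Slice (Shift E₂ T J) j
    rwa [slice_shift_of_le hj]
  have hagree : ∀ s ∈ (· - T) ⁻¹' Slice E₂ (j - J), φ s j = φ₂ (s - T) (j - J) :=
    fun s hs => hφ.2.2 (s, j) (hshift s hs)
  have htT : T < t := (sub_nonneg.1 (h₂.1.1.slice_subset_Ici _ htE₂)).lt_of_ne' htT'
  have hclosure : t ∉ closure (Slice E₁ j) := fun ht =>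
    htT.not_ge (closure_minimal (hmax.slice_subset_Iic j) isClosed_Iic ht)
  rw [hagree t htE₂, hυ.2.2 (t, j) (hshift t htE₂), hφ.slice_eq, union_comm, slice_shift_of_le hj]
  exact ((hderiv.comp_sub_const T).congr hagree (hagree t htE₂)).union_of_notMem_closure hclosure

end Concat

theorem concat_flow_dynamics_general {n m : ℕ} (H : HybridSystem n m)
    (φ₁ : ℝ → ℕ → Vec n) (υ₁ : ℝ → ℕ → Vec m) (E₁ : Set (ℝ × ℕ))
    (φ₂ : ℝ → ℕ → Vec n) (υ₂ : ℝ → ℕ → Vec m) (E₂ : Set (ℝ × ℕ))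
    (φ : ℝ → ℕ → Vec n) (υ : ℝ → ℕ → Vec m) (E : Set (ℝ × ℕ))
    (T : ℝ) (J : ℕ)
    (h₁ : IsSolutionPair H φ₁ υ₁ E₁)
    (h₂ : IsSolutionPair H φ₂ υ₂ E₂)
    (hmax : IsMaxOf E₁ T J)
    (hφ : IsConcat T J φ₁ E₁ φ₂ E₂ φ E)
    (hυ : IsConcat T J υ₁ E₁ υ₂ E₂ υ E) :
    ∀ j : ℕ, (interior (Slice E j)).Nonempty →
      ∀ᵐ t ∂(volume.restrict (Slice E j)),
        HasDerivWithinAt (fun s => φ s j) (H.f (φ t j, υ t j)) (Slice E j) t := by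
  intro j _
  have hpieces := (ae_restrict_union_iff _ _ _).2
    ⟨ae_hasDerivWithinAt_concat_left h₁ h₂.1.1 hmax hφ hυ j,
      ae_hasDerivWithinAt_concat_right h₂ hmax hφ hυ j⟩
  rwa [← hφ.slice_eq] at hpieces

/-- Lemma 11: if `ψ₁` and `ψ₂` are solution pairs to `H` with `ψ₁` compact, then the
concatenation `ψ = (φ, υ) = ψ₁|ψ₂` satisfies the flow dynamics: for each `j` with
`I^j_ψ` of nonempty interior, `(d/dt)φ(t,j) = f(φ(t,j), υ(t,j))` for almost all
`t ∈ I^j_ψ`. -/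
theorem concat_flow_dynamics {n m : ℕ} (H : HybridSystem n m)
    (φ₁ : ℝ → ℕ → Vec n) (υ₁ : ℝ → ℕ → Vec m) (E₁ : Set (ℝ × ℕ))
    (φ₂ : ℝ → ℕ → Vec n) (υ₂ : ℝ → ℕ → Vec m) (E₂ : Set (ℝ × ℕ))
    (φ : ℝ → ℕ → Vec n) (υ : ℝ → ℕ → Vec m) (E : Set (ℝ × ℕ))
    (T : ℝ) (J : ℕ)
    (h₁ : IsSolutionPair H φ₁ υ₁ E₁)
    (h₂ : IsSolutionPair H φ₂ υ₂ E₂)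
    (hcpt : IsCompactHTD E₁)
    (hmax : IsMaxOf E₁ T J)
    (hφ : IsConcat T J φ₁ E₁ φ₂ E₂ φ E)
    (hυ : IsConcat T J υ₁ E₁ υ₂ E₂ υ E) :
    ∀ j : ℕ, (interior (Slice E j)).Nonempty →
      ∀ᵐ t ∂(volume.restrict (Slice E j)),
        HasDerivWithinAt (fun s => φ s j) (H.f (φ t j, υ t j)) (Slice E j) t :=
  concat_flow_dynamics_general H φ₁ υ₁ E₁ φ₂ υ₂ E₂ φ υ E T J h₁ h₂ hmax hφ hυ
end
end

section
/- Let ψ₁ = (φ₁, υ₁) and ψ₂ = (φ₂, υ₂) be solution pairs to a hybrid system H = (C, f, D, g) with ψ₁ compact, such that φ₁(T,J) = φ₂(0,0) where (T,J) = max dom φ₁. Then the concatenation ψ = (φ, υ) = ψ₁|ψ₂ satisfies: for all (t,j) ∈ dom ψ such that (t,j+1) ∈ dom ψ, (φ(t,j), υ(t,j)) ∈ D and φ(t,j+1) = g(φ(t,j), υ(t,j)). -/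
open MeasureTheory Set

noncomputable section

lemma compactHTD_zero_mem {E : Set (ℝ × ℕ)} (h : IsCompactHTD E) : ((0 : ℝ), (0 : ℕ)) ∈ E := by
  obtain ⟨J, t, h0, hmono, hE⟩ := h
  rw [hE]
  refine Set.mem_biUnion (Finset.mem_range.mpr (Nat.succ_pos J)) ?_
  constructor
  · constructor
    · simp [h0]
    · simpa [h0] using hmono 0 (Nat.zero_le J)
  · rfl

lemma compactHTD_nonneg {E : Set (ℝ × ℕ)} (h : IsCompactHTD E) :
    ∀ p ∈ E, (0 : ℝ) ≤ p.1 := by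
  obtain ⟨J, t, h0, hmono, hE⟩ := h
  have ht : ∀ i, i ≤ J + 1 → 0 ≤ t i := by
    intro i hi
    induction i with
    | zero => simp [h0]
    | succ k ih =>
      have hk : k ≤ J := by omega
      exact le_trans (ih (by omega)) (hmono k hk)
  intro p hp
  rw [hE] at hp
  obtain ⟨j, hj, hmem⟩ := Set.mem_iUnion₂.mp hp
  exact le_trans (ht j (by simpa using le_of_lt (Finset.mem_range.mp hj)))
    hmem.1.1

lemma htd_zero_mem {E : Set (ℝ × ℕ)} (h : IsHTD E) : ((0 : ℝ), (0 : ℕ)) ∈ E := by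
  obtain ⟨F, hF, _, hE⟩ := h
  rw [hE]
  exact Set.mem_iUnion.mpr ⟨0, compactHTD_zero_mem (hF 0)⟩

lemma htd_nonneg {E : Set (ℝ × ℕ)} (h : IsHTD E) : ∀ p ∈ E, (0 : ℝ) ≤ p.1 := by
  obtain ⟨F, hF, _, hE⟩ := h
  intro p hp
  rw [hE] at hp
  obtain ⟨k, hk⟩ := Set.mem_iUnion.mp hp
  exact compactHTD_nonneg (hF k) p hk

/-- Lemma 12: if `ψ₁` and `ψ₂` are solution pairs to `H` with `ψ₁` compact and
`φ₁(T,J) = φ₂(0,0)` where `(T,J) = max dom φ₁`, then the concatenation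
`ψ = (φ, υ) = ψ₁|ψ₂` satisfies the jump conditions: for all `(t,j) ∈ dom ψ` with
`(t,j+1) ∈ dom ψ`, `(φ(t,j), υ(t,j)) ∈ D` and `φ(t,j+1) = g(φ(t,j), υ(t,j))`. -/
theorem concat_jump_conditions {n m : ℕ} (H : HybridSystem n m)
    (φ₁ : ℝ → ℕ → Vec n) (υ₁ : ℝ → ℕ → Vec m) (E₁ : Set (ℝ × ℕ))
    (φ₂ : ℝ → ℕ → Vec n) (υ₂ : ℝ → ℕ → Vec m) (E₂ : Set (ℝ × ℕ))
    (φ : ℝ → ℕ → Vec n) (υ : ℝ → ℕ → Vec m) (E : Set (ℝ × ℕ))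
    (T : ℝ) (J : ℕ)
    (h₁ : IsSolutionPair H φ₁ υ₁ E₁)
    (h₂ : IsSolutionPair H φ₂ υ₂ E₂)
    (hcpt : IsCompactHTD E₁)
    (hmax : IsMaxOf E₁ T J)
    (hend : φ₁ T J = φ₂ 0 0)
    (hφ : IsConcat T J φ₁ E₁ φ₂ E₂ φ E)
    (hυ : IsConcat T J υ₁ E₁ υ₂ E₂ υ E) :
    ∀ p : ℝ × ℕ, p ∈ E → (p.1, p.2 + 1) ∈ E →
      (φ p.1 p.2, υ p.1 p.2) ∈ H.D ∧
      φ p.1 (p.2 + 1) = H.g (φ p.1 p.2, υ p.1 p.2) := by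
  intro p hp hp'
  obtain ⟨hE, hφ1, hφ2⟩ := hφ
  obtain ⟨hE', hυ1, hυ2⟩ := hυ
  have hE2htd : IsHTD E₂ := h₂.1.1
  have h00 : ((0 : ℝ), (0 : ℕ)) ∈ E₂ := htd_zero_mem hE2htd
  have hTJshift : ((T, J) : ℝ × ℕ) ∈ Shift E₂ T J := ⟨(0, 0), h00, by simp⟩
  have hjump1 := h₁.2.2.2.2
  have hjump2 := h₂.2.2.2.2
  rw [hE] at hp hp'
  by_cases hA : (p.1, p.2 + 1) ∈ E₁
  · -- jump inside E₁
    have hpJ : p.2 + 1 ≤ J := (hmax.2 _ hA).2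
    have hpE1 : p ∈ E₁ := by
      rcases hp with h | h
      · exact h
      · exfalso
        obtain ⟨q, hq, hpq⟩ := h
        have : p.2 = q.2 + J := congrArg Prod.snd hpq
        omega
    have hpne : p ≠ (T, J) := by
      intro h
      have : p.2 = J := congrArg Prod.snd h
      omega
    obtain ⟨hD, hg⟩ := hjump1 p hpE1 hA
    have e1 : φ p.1 p.2 = φ₁ p.1 p.2 := hφ1 p hpE1 hpne
    have e2 : υ p.1 p.2 = υ₁ p.1 p.2 := hυ1 p hpE1 hpne
    have e3 : φ p.1 (p.2 + 1) = φ₁ p.1 (p.2 + 1) := by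
      by_cases hq : ((p.1, p.2 + 1) : ℝ × ℕ) = (T, J)
      · have h1 : p.1 = T := congrArg Prod.fst hq
        have h2 : p.2 + 1 = J := congrArg Prod.snd hq
        rw [h1, h2]
        have hTJ := hφ2 (T, J) hTJshift
        simp only at hTJ
        rw [hTJ]
        simp [hend.symm]
      · exact hφ1 (p.1, p.2 + 1) hA hq
    rw [e1, e2, e3]
    exact ⟨hD, hg⟩
  · -- jump inside the shifted E₂
    have hpshift' : (p.1, p.2 + 1) ∈ Shift E₂ T J := by
      rcases hp' with h | h
      · exact absurd h hA
      · exact h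
    obtain ⟨q', hq'E, heq'⟩ := hpshift'
    have hq'1 : p.1 = q'.1 + T := congrArg Prod.fst heq'
    have hq'2 : p.2 + 1 = q'.2 + J := congrArg Prod.snd heq'
    -- get a representation of p as a shifted point of E₂ with jump in E₂
    obtain ⟨q, hqE, hpq, hq'⟩ :
        ∃ q ∈ E₂, p = (q.1 + T, q.2 + J) ∧ (q.1, q.2 + 1) ∈ E₂ := by
      rcases hp with h | h
      · -- p ∈ E₁, so p = (T, J)
        have hp1 : p.1 ≤ T := (hmax.2 _ h).1
        have hp2 : p.2 ≤ J := (hmax.2 _ h).2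
        have hq'pos : (0 : ℝ) ≤ q'.1 := htd_nonneg hE2htd q' hq'E
        have hq10 : q'.1 = 0 := by linarith
        have hq2le : q'.2 ≤ 1 := by omega
        rcases Nat.lt_or_ge q'.2 1 with h1 | h1
        · -- q'.2 = 0 : (p.1, p.2+1) = (T, J) ∈ E₁, contradiction
          exfalso
          apply hA
          have hp1T : p.1 = T := by rw [hq'1, hq10]; ring
          have hp2J : p.2 + 1 = J := by omega
          rw [hp1T] at *
          have : ((T, p.2 + 1) : ℝ × ℕ) = (T, J) := by rw [hp2J]
          rw [this]
          exact hmax.1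
        · -- q'.2 = 1 : p = (T, J)
          have hq21 : q'.2 = 1 := by omega
          have hp2J : p.2 = J := by omega
          have hp1T : p.1 = T := by rw [hq'1, hq10]; ring
          refine ⟨(0, 0), h00, ?_, ?_⟩
          · ext <;> simp [hp1T, hp2J]
          · have : q' = ((0 : ℝ), (1 : ℕ)) := by
              ext
              · exact hq10
              · exact hq21
            simpa using this ▸ hq'E
      · obtain ⟨q, hq, hpq⟩ := h
        refine ⟨q, hq, hpq, ?_⟩
        have e1 : q'.1 = q.1 := by
          have : p.1 = q.1 + T := congrArg Prod.fst hpq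
          linarith [hq'1, this]
        have e2 : q'.2 = q.2 + 1 := by
          have : p.2 = q.2 + J := congrArg Prod.snd hpq
          omega
        have : q' = (q.1, q.2 + 1) := by
          ext
          · exact e1
          · exact e2
        exact this ▸ hq'E
    have hp1 : p.1 = q.1 + T := congrArg Prod.fst hpq
    have hp2 : p.2 = q.2 + J := congrArg Prod.snd hpq
    have hpshift : p ∈ Shift E₂ T J := ⟨q, hqE, hpq⟩
    obtain ⟨hD, hg⟩ := hjump2 q hqE hq'
    have e1 : φ p.1 p.2 = φ₂ q.1 q.2 := by
      have := hφ2 p hpshift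
      rw [this, hp1, hp2]
      norm_num
    have e2 : υ p.1 p.2 = υ₂ q.1 q.2 := by
      have := hυ2 p hpshift
      rw [this, hp1, hp2]
      norm_num
    have e3 : φ p.1 (p.2 + 1) = φ₂ q.1 (q.2 + 1) := by
      have hmem : ((p.1, p.2 + 1) : ℝ × ℕ) ∈ Shift E₂ T J :=
        ⟨(q.1, q.2 + 1), hq', by rw [hp1, hp2]; ext <;> simp <;> ring⟩
      have := hφ2 (p.1, p.2 + 1) hmem
      simp only at this
      rw [this, hp1, hp2]
      have h4 : q.2 + J + 1 - J = q.2 + 1 := by omega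
      have h5 : q.1 + T - T = q.1 := by ring
      rw [h4, h5]
    rw [e1, e2, e3]
    exact ⟨hD, hg⟩
end
end

section
/- Let (φ, υ) be a compact solution pair to a hybrid system H = (C, f, D, g) with (T,J) = max dom(φ,υ), and let (φ', υ') be its reversal. Then for all (t,j) ∈ dom(φ',υ') such that (t, j+1) ∈ dom(φ',υ'): (φ'(t,j), υ'(t,j)) ∈ D^bw and φ'(t, j+1) ∈ g^bw(φ'(t,j), υ'(t,j)), where g^bw(x,u) := {z ∈ ℝ^n : x = g(z,u) and (z,u) ∈ D} and D^bw := {(x,u) ∈ ℝ^n × ℝ^m : ∃ z ∈ ℝ^n with x = g(z,u) and (z,u) ∈ D}. -/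
open MeasureTheory Set

noncomputable section

/-- The reversal of a compact solution pair to `H` satisfies the backward jump
conditions: for all `(t,j) ∈ dom(φ',υ')` with `(t,j+1) ∈ dom(φ',υ')`,
`(φ'(t,j), υ'(t,j)) ∈ D^bw` and `φ'(t,j+1) ∈ g^bw(φ'(t,j), υ'(t,j))`. -/
theorem reversal_jump_conditions {n m : ℕ} (H : HybridSystem n m)
    (φ : ℝ → ℕ → Vec n) (υ : ℝ → ℕ → Vec m) (E : Set (ℝ × ℕ))
    (φ' : ℝ → ℕ → Vec n) (υ' : ℝ → ℕ → Vec m) (E' : Set (ℝ × ℕ))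
    (T : ℝ) (J : ℕ)
    (hsol : IsSolutionPair H φ υ E)
    (hcpt : IsCompactHTD E)
    (hmax : IsMaxOf E T J)
    (hrev : IsReversal H.C T J φ υ E φ' υ' E') :
    ∀ p : ℝ × ℕ, p ∈ E' → (p.1, p.2 + 1) ∈ E' →
      (φ' p.1 p.2, υ' p.1 p.2) ∈ Dbw H ∧
      φ' p.1 (p.2 + 1) ∈ gbw H (φ' p.1 p.2) (υ' p.1 p.2) := by
  rintro ⟨t, j⟩ hp hp1
  obtain ⟨hE'eq, hφ', hυint, hυ0, hυjump⟩ := hrev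
  obtain ⟨q, hq, hqeq⟩ := hE'eq ▸ hp
  obtain ⟨q', hq', hq'eq⟩ := hE'eq ▸ hp1
  have hqle := (hmax.2 q hq).2
  have hq'le := (hmax.2 q' hq').2
  have ht1 : t = T - q.1 := congrArg Prod.fst hqeq
  have hj1 : j = J - q.2 := congrArg Prod.snd hqeq
  have ht2 : t = T - q'.1 := congrArg Prod.fst hq'eq
  have hj2 : j + 1 = J - q'.2 := congrArg Prod.snd hq'eq
  have hq2 : q.2 = J - j := by omega
  have hq'2 : q'.2 = J - j - 1 := by omega
  have hjJ : j + 1 ≤ J := by omega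
  have hq1 : q.1 = T - t := by rw [ht1]; ring
  have hq'1 : q'.1 = T - t := by rw [ht2]; ring
  -- q' = (T - t, J - j - 1) ∈ E, and (T - t, J - j) = (q'.1, q'.2 + 1) ∈ E
  have hq'E : (T - t, J - j - 1) ∈ E := by rw [← hq'1, ← hq'2]; exact hq'
  have hqE : (T - t, J - j) ∈ E := by
    have : q = (T - t, J - j) := Prod.ext hq1 hq2
    exact this ▸ hq
  have hstep : ((T - t : ℝ), (J - j - 1 : ℕ)) ∈ E ∧
      ((T - t : ℝ), (J - j - 1 : ℕ) + 1) ∈ E := by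
    constructor
    · exact hq'E
    · have : (J - j - 1) + 1 = J - j := by omega
      rw [this]; exact hqE
  have hjump := hsol.2.2.2.2 (T - t, J - j - 1) hstep.1 hstep.2
  simp only at hjump
  have hJ1 : (J - j - 1) + 1 = J - j := by omega
  rw [hJ1] at hjump
  have hJ2 : J - (j + 1) = J - j - 1 := by omega
  -- φ' values
  have hφtj : φ' t j = φ (T - t) (J - j) := hφ' (t, j) hp
  have hφtj1 : φ' t (j + 1) = φ (T - t) (J - j - 1) := by
    have := hφ' (t, j + 1) hp1
    simp only at this
    rw [this, hJ2]
  have hυtj : υ' t j = υ (T - t) (J - j - 1) := by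
    have := hυjump (t, j) hp hp1
    simp only at this
    rw [this, hJ2]
  have hgeq : φ' t j = H.g (φ' t (j + 1), υ' t j) := by
    rw [hφtj, hφtj1, hυtj, hjump.2]
  have hDmem : (φ' t (j + 1), υ' t j) ∈ H.D := by
    rw [hφtj1, hυtj]; exact hjump.1
  exact ⟨⟨φ' t (j + 1), hgeq, hDmem⟩, hgeq, hDmem⟩
end
end
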